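/- There do not exist affine (over F_2) functions q_E : (F_2)^3 → F_2, q_R : (F_2)^2 → F_2, q_B : (F_2)^2 → F_2, and q_L : (F_2)^2 → F_2 such that q_R(b0,b1) ⊕ q_B(b1,b2) ⊕ q_L(b0,b2) = 0 for all (b0,b1,b2) ∈ (F_2)^3, and simultaneously q_E(0,0,0) = 0, q_E(0,1,1) ⊕ q_R(0,1) ⊕ q_L(0,1) = 1, q_E(1,0,1) ⊕ q_R(1,0) ⊕ q_B(0,1) = 1, and q_E(1,1,0) ⊕ q_B(1,0) ⊕ q_L(1,0) = 1. -/

import Mathlib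

/-!
Add the four correlation conditions. An affine function of three variables sums to zero over the
even-weight subspace `{000, 011, 101, 110}` (each coefficient occurs an even number of times), so
the `qE` terms cancel; the remaining `qR`, `qB`, `qL` terms are exactly the sum of the consistency
condition at `000, 100, 010, 001`, so they cancel too. What is left is `0 = 1 + 1 + 1 = 1`.
-/

section CharTwo

variable {R : Type*} [CommRing R] [CharP R 2]

theorem affine_sum_evenWeight_eq_zero (f : R → R → R → R)
    (hf : ∃ c a0 a1 a2 : R, ∀ x y z, f x y z = c + a0 * x + a1 * y + a2 * z) :
    f 0 0 0 + f 0 1 1 + f 1 0 1 + f 1 1 0 = 0 := by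
  obtain ⟨c, a0, a1, a2, hf⟩ := hf
  simp only [hf]
  linear_combination (2 * c + a0 + a1 + a2) * CharTwo.two_eq_zero (R := R)

theorem cyclic_sum_off_diagonal_eq_zero {α : Type*} (qR qB qL : α → α → R)
    (h : ∀ x y z, qR x y + qB y z + qL x z = 0) (a b : α) :
    qR a b + qL a b + qR b a + qB a b + qB b a + qL b a = 0 := by
  linear_combination h a a a + h b a a + h a b a + h a a b -
    (qR a a + qB a a + qL a a) * CharTwo.two_eq_zero (R := R)

end CharTwo

/-- There are no affine functions over `F_2` reproducing the graph-state correlations. -/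
theorem no_affine_strategy :
    ¬ ∃ (qE : ZMod 2 → ZMod 2 → ZMod 2 → ZMod 2)
        (qR qB qL : ZMod 2 → ZMod 2 → ZMod 2),
      (∃ c a0 a1 a2 : ZMod 2, ∀ x y z, qE x y z = c + a0 * x + a1 * y + a2 * z) ∧
      (∃ c a b : ZMod 2, ∀ x y, qR x y = c + a * x + b * y) ∧
      (∃ c a b : ZMod 2, ∀ x y, qB x y = c + a * x + b * y) ∧
      (∃ c a b : ZMod 2, ∀ x y, qL x y = c + a * x + b * y) ∧
      (∀ b0 b1 b2 : ZMod 2, qR b0 b1 + qB b1 b2 + qL b0 b2 = 0) ∧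
      qE 0 0 0 = 0 ∧
      qE 0 1 1 + qR 0 1 + qL 0 1 = 1 ∧
      qE 1 0 1 + qR 1 0 + qB 0 1 = 1 ∧
      qE 1 1 0 + qB 1 0 + qL 1 0 = 1 := by
  rintro ⟨qE, qR, qB, qL, hE, -, -, -, hcons, h000, h011, h101, h110⟩
  have hqE := affine_sum_evenWeight_eq_zero qE hE
  have hedges := cyclic_sum_off_diagonal_eq_zero qR qB qL hcons 0 1
  have h3 : (3 : ZMod 2) = 0 := by
    linear_combination hqE + hedges - h000 - h011 - h101 - h110
  exact absurd h3 (by decide)
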